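/- arXiv:1404.6600 — 2 statements merged into one kernel-verified Lean document; each statement's English description precedes it below -/
import Mathlib

section
/- Let P(z) = a_n z^n + Σ_{j=μ}^{n} a_{n−j} z^{n−j}, 1 ≤ μ ≤ n, be a polynomial of degree n having all its zeros in |z| ≤ k, where k ≤ 1, and set m = min_{|z|=k} |P(z)|. Then A_μ ≤ k^μ, where A_μ = (n(|a_n| − m/k^n) k^{2μ} + μ|a_{n−μ}| k^{μ−1}) / (n(|a_n| − m/k^n) k^{μ−1} + μ|a_{n−μ}|). -/
open Polynomial Metric

/-!
Write `M = m / kⁿ`. Since `P` has no zeros in `|z| > k`, the reversed polynomial `P*` has none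
in `|w| ≤ 1/k`, so the minimum modulus principle gives `|P*(w)| ≥ M` there; at `w = 0` this is
`M ≤ |aₙ|`, and for `|z| ≥ k` it is `|P(z)| ≥ M |z|ⁿ`. Hence for `|c| < M` the polynomial
`P + c zⁿ` still has all its zeros in `|z| ≤ k`, with the same gap `a_{n-1} = ⋯ = a_{n-μ+1} = 0`.
For such a polynomial Newton's identities collapse to `p_μ = (-1)^{μ+1} μ e_μ`, so bounding the
power sum of the roots gives `μ |a_{n-μ}| ≤ n |leading coefficient| k^μ`. Taking `c` opposite to
`aₙ` with `|c| → M` yields `μ |a_{n-μ}| ≤ n (|aₙ| - M) k^μ`, from which `A_μ ≤ k^μ` follows by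
elementary algebra, using `k ≤ 1`.
-/

theorem Multiset.sum_map_pow_eq_of_esymm_eq_zero {R : Type*} [CommRing R] (s : Multiset R)
    {μ : ℕ} (hμ : 0 < μ) (h : ∀ j, 0 < j → j < μ → s.esymm j = 0) :
    (s.map (· ^ μ)).sum = (-1) ^ (μ + 1) * μ * s.esymm μ := by
  classical
  have aeval_esymm (j : ℕ) : MvPolynomial.aeval (fun x : s ↦ (x : R))
      (MvPolynomial.esymm s R j) = s.esymm j := by
    rw [MvPolynomial.aeval_esymm_eq_multiset_esymm, Multiset.map_univ_coe]
  have aeval_psum : MvPolynomial.aeval (fun x : s ↦ (x : R))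
      (MvPolynomial.psum s R μ) = (s.map (· ^ μ)).sum := by
    simp only [MvPolynomial.psum, map_sum, map_pow, MvPolynomial.aeval_X]
    rw [Finset.sum_eq_multiset_sum]
    exact congrArg Multiset.sum (Multiset.map_univ s (· ^ μ))
  have newton := congrArg (MvPolynomial.aeval fun x : s ↦ (x : R))
    (MvPolynomial.psum_eq_mul_esymm_sub_sum s R μ hμ)
  rw [map_sub, map_sum, Finset.sum_eq_zero, sub_zero, map_mul, map_mul, aeval_esymm,
    aeval_psum] at newton
  · simpa using newton
  · intro a ha
    obtain ⟨ha0, haμ⟩ := (Finset.mem_filter.1 ha).2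
    rw [map_mul, map_mul, aeval_esymm, h a.1 ha0 haμ, mul_zero, zero_mul]

theorem Polynomial.coeff_natDegree_sub_eq_esymm_roots (P : ℂ[X]) {j : ℕ}
    (hj : j ≤ P.natDegree) :
    P.coeff (P.natDegree - j) = P.leadingCoeff * (-1) ^ j * P.roots.esymm j := by
  have hcard := splits_iff_card_roots.mp (IsAlgClosed.splits P)
  rw [coeff_eq_esymm_roots_of_card hcard (Nat.sub_le _ _), Nat.sub_sub_self hj]

theorem Polynomial.natCast_mul_norm_coeff_sub_le_of_norm_roots_le {P : ℂ[X]} {μ : ℕ} {k : ℝ}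
    (hμ : 0 < μ) (hμn : μ ≤ P.natDegree) (hgap : ∀ j, 0 < j → j < μ → P.coeff (P.natDegree - j) = 0)
    (hroots : ∀ z, P.IsRoot z → ‖z‖ ≤ k) :
    μ * ‖P.coeff (P.natDegree - μ)‖ ≤ P.natDegree * ‖P.leadingCoeff‖ * k ^ μ := by
  have hlc : P.leadingCoeff ≠ 0 :=
    leadingCoeff_ne_zero.2 (ne_zero_of_natDegree_gt (hμ.trans_le hμn))
  have hesymm : ∀ j, 0 < j → j < μ → P.roots.esymm j = 0 := fun j hj hjμ ↦ by
    simpa [P.coeff_natDegree_sub_eq_esymm_roots (hjμ.le.trans hμn), hlc] using hgap j hj hjμ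
  have hpow : ∀ x ∈ P.roots.map (‖·‖ ^ μ), x ≤ k ^ μ := by
    simp only [Multiset.mem_map, mem_roots', forall_exists_index, and_imp]
    rintro _ z - hz rfl
    exact pow_le_pow_left₀ (norm_nonneg z) (hroots z hz) μ
  have hcard : Multiset.card P.roots = P.natDegree :=
    splits_iff_card_roots.mp (IsAlgClosed.splits P)
  calc (μ : ℝ) * ‖P.coeff (P.natDegree - μ)‖
      = ‖P.leadingCoeff‖ * ‖(P.roots.map (· ^ μ)).sum‖ := by
        rw [P.roots.sum_map_pow_eq_of_esymm_eq_zero hμ hesymm,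
          P.coeff_natDegree_sub_eq_esymm_roots hμn]
        simp only [Complex.norm_mul, norm_pow, norm_neg, norm_one, one_pow, mul_one,
          RCLike.norm_natCast, one_mul]
        ring
    _ ≤ ‖P.leadingCoeff‖ * (P.roots.map (‖·‖ ^ μ)).sum := by
        gcongr
        simpa [Multiset.map_map] using norm_multiset_sum_le (P.roots.map (· ^ μ))
    _ ≤ ‖P.leadingCoeff‖ * (P.natDegree * k ^ μ) := by
        gcongr
        simpa [hcard] using Multiset.sum_le_card_nsmul _ _ hpow
    _ = P.natDegree * ‖P.leadingCoeff‖ * k ^ μ := by ring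

theorem Complex.le_norm_of_forall_mem_sphere_le_norm {f : ℂ → ℂ} {c : ℂ} {r m : ℝ}
    (hr : 0 < r) (hm : 0 < m) (hf : DifferentiableOn ℂ f (closedBall c r))
    (hne : ∀ z ∈ closedBall c r, f z ≠ 0) (hle : ∀ z ∈ sphere c r, m ≤ ‖f z‖)
    {w : ℂ} (hw : w ∈ closedBall c r) : m ≤ ‖f w‖ := by
  have hcl : closure (ball c r) = closedBall c r := closure_ball c hr.ne'
  have hinv : ‖f⁻¹ w‖ ≤ m⁻¹ := by
    refine Complex.norm_le_of_forall_mem_frontier_norm_le isBounded_ball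
      (hcl ▸ hf.inv hne).diffContOnCl (fun z hz ↦ ?_) (hcl ▸ hw)
    rw [frontier_ball c hr.ne'] at hz
    rw [Pi.inv_apply, norm_inv]
    exact inv_anti₀ hm (hle z hz)
  rwa [Pi.inv_apply, norm_inv, inv_le_inv₀ (norm_pos_iff.2 (hne w hw)) hm] at hinv

theorem Polynomial.eval_reverse_inv_mul_pow {K : Type*} [Field K] (P : K[X]) {w : K}
    (hw : w ≠ 0) : P.reverse.eval w⁻¹ * w ^ P.natDegree = P.eval w := by
  let := invertibleOfNonzero hw
  simpa [invOf_eq_inv] using eval₂_reverse_mul_pow (RingHom.id K) w P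

theorem Polynomial.eval_reverse_ne_zero {P : ℂ[X]} {k m : ℝ} (hk : 0 < k) (hm : 0 < m)
    (hroots : ∀ z, P.IsRoot z → ‖z‖ ≤ k) (hle : ∀ z ∈ sphere (0 : ℂ) k, m ≤ ‖P.eval z‖)
    {w : ℂ} (hw : ‖w‖ ≤ k⁻¹) : P.reverse.eval w ≠ 0 := by
  intro h0
  rcases eq_or_ne w 0 with rfl | hw0
  · rw [← coeff_zero_eq_eval_zero, coeff_zero_reverse, leadingCoeff_eq_zero] at h0
    have := hle k (by simp [hk.le])
    rw [h0, eval_zero, norm_zero] at this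
    exact hm.not_ge this
  · have hroot : P.IsRoot w⁻¹ := by
      rw [IsRoot, ← P.eval_reverse_inv_mul_pow (inv_ne_zero hw0), inv_inv, h0, zero_mul]
    have hnorm : ‖w⁻¹‖ = k := by
      refine le_antisymm (hroots _ hroot) ?_
      rw [norm_inv]
      exact (le_inv_comm₀ (norm_pos_iff.2 hw0) hk).1 hw
    have := hle w⁻¹ (by simpa using hnorm)
    rw [hroot.eq_zero, norm_zero] at this
    exact hm.not_ge this

theorem Polynomial.div_pow_le_norm_eval_reverse {P : ℂ[X]} {k m : ℝ} (hk : 0 < k) (hm : 0 < m)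
    (hroots : ∀ z, P.IsRoot z → ‖z‖ ≤ k) (hle : ∀ z ∈ sphere (0 : ℂ) k, m ≤ ‖P.eval z‖)
    {w : ℂ} (hw : ‖w‖ ≤ k⁻¹) : m / k ^ P.natDegree ≤ ‖P.reverse.eval w‖ := by
  refine Complex.le_norm_of_forall_mem_sphere_le_norm (c := 0) (inv_pos.2 hk) (by positivity)
    P.reverse.differentiable.differentiableOn
    (fun z hz ↦ eval_reverse_ne_zero hk hm hroots hle (by simpa using hz))
    (fun z hz ↦ ?_) (by simpa using hw)
  have hz : ‖z‖ = k⁻¹ := by simpa using hz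
  have hz0 : z ≠ 0 := norm_pos_iff.1 (hz ▸ inv_pos.2 hk)
  have hinv : ‖z⁻¹‖ = k := by rw [norm_inv, hz, inv_inv]
  have := hle z⁻¹ (by simpa using hinv)
  rw [← P.eval_reverse_inv_mul_pow (inv_ne_zero hz0), inv_inv, norm_mul, norm_pow, hinv] at this
  exact (div_le_iff₀ (by positivity)).2 this

theorem Polynomial.div_pow_le_norm_leadingCoeff {P : ℂ[X]} {k m : ℝ} (hk : 0 < k) (hm : 0 < m)
    (hroots : ∀ z, P.IsRoot z → ‖z‖ ≤ k) (hle : ∀ z ∈ sphere (0 : ℂ) k, m ≤ ‖P.eval z‖) :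
    m / k ^ P.natDegree ≤ ‖P.leadingCoeff‖ := by
  simpa [← coeff_zero_eq_eval_zero] using
    div_pow_le_norm_eval_reverse hk hm hroots hle (w := 0) (by simp [hk.le])

theorem Polynomial.div_pow_mul_pow_le_norm_eval {P : ℂ[X]} {k m : ℝ} (hk : 0 < k) (hm : 0 < m)
    (hroots : ∀ z, P.IsRoot z → ‖z‖ ≤ k) (hle : ∀ z ∈ sphere (0 : ℂ) k, m ≤ ‖P.eval z‖)
    {z : ℂ} (hz : k ≤ ‖z‖) : m / k ^ P.natDegree * ‖z‖ ^ P.natDegree ≤ ‖P.eval z‖ := by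
  have hz0 : z ≠ 0 := norm_pos_iff.1 (hk.trans_le hz)
  rw [← P.eval_reverse_inv_mul_pow hz0, norm_mul, norm_pow]
  gcongr
  refine div_pow_le_norm_eval_reverse hk hm hroots hle ?_
  rw [norm_inv]
  exact inv_anti₀ hk hz

theorem Polynomial.norm_le_of_isRoot_add_C_mul_X_pow {P : ℂ[X]} {k m : ℝ} (hk : 0 < k)
    (hm : 0 < m) (hroots : ∀ z, P.IsRoot z → ‖z‖ ≤ k)
    (hle : ∀ z ∈ sphere (0 : ℂ) k, m ≤ ‖P.eval z‖) {c : ℂ} (hc : ‖c‖ < m / k ^ P.natDegree)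
    {z : ℂ} (hz : (P + C c * X ^ P.natDegree).IsRoot z) : ‖z‖ ≤ k := by
  by_contra! hkz
  have hPz : P.eval z = -(c * z ^ P.natDegree) := by
    simpa [eq_neg_iff_add_eq_zero] using hz
  have := div_pow_mul_pow_le_norm_eval hk hm hroots hle hkz.le
  rw [hPz, norm_neg, norm_mul, norm_pow] at this
  exact (mul_lt_mul_of_pos_right hc (pow_pos (hk.trans hkz) _)).not_ge this

theorem Polynomial.natCast_mul_norm_coeff_sub_le_norm_leadingCoeff_add {P : ℂ[X]} {μ : ℕ}
    {k m : ℝ} (hμ : 0 < μ) (hμn : μ ≤ P.natDegree)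
    (hgap : ∀ j, 0 < j → j < μ → P.coeff (P.natDegree - j) = 0) (hk : 0 < k) (hm : 0 < m)
    (hroots : ∀ z, P.IsRoot z → ‖z‖ ≤ k) (hle : ∀ z ∈ sphere (0 : ℂ) k, m ≤ ‖P.eval z‖)
    {c : ℂ} (hc : ‖c‖ < m / k ^ P.natDegree) :
    μ * ‖P.coeff (P.natDegree - μ)‖ ≤ P.natDegree * ‖P.leadingCoeff + c‖ * k ^ μ := by
  set n := P.natDegree
  set F := P + C c * X ^ n
  have hF : ∀ i, F.coeff i = P.coeff i + if i = n then c else 0 := fun i ↦ by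
    rw [coeff_add, coeff_C_mul_X_pow]
  have hFn : F.coeff n = P.leadingCoeff + c := by rw [hF, if_pos rfl]; rfl
  have hFdeg : F.natDegree = n := by
    refine natDegree_eq_of_le_of_coeff_ne_zero ?_ ?_
    · exact natDegree_add_le_of_degree_le le_rfl (natDegree_C_mul_X_pow_le c n)
    · have hlc := div_pow_le_norm_leadingCoeff hk hm hroots hle
      rw [hFn, Ne, add_eq_zero_iff_eq_neg]
      intro h
      rw [h, norm_neg] at hlc
      exact hc.not_ge hlc
  have hFsub : ∀ j, 0 < j → F.coeff (n - j) = P.coeff (n - j) := fun j hj ↦ by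
    rw [hF, if_neg (by omega), add_zero]
  have := natCast_mul_norm_coeff_sub_le_of_norm_roots_le (P := F) hμ (hFdeg ▸ hμn)
    (fun j hj hjμ ↦ by rw [hFdeg, hFsub j hj, hgap j hj hjμ])
    (fun z hz ↦ norm_le_of_isRoot_add_C_mul_X_pow hk hm hroots hle hc hz)
  rwa [hFdeg, hFsub μ hμ, leadingCoeff, hFdeg, hFn] at this

theorem Polynomial.natCast_mul_norm_coeff_sub_le_of_le_norm_eval_sphere {P : ℂ[X]} {μ : ℕ}
    {k m : ℝ} (hμ : 0 < μ) (hμn : μ ≤ P.natDegree)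
    (hgap : ∀ j, 0 < j → j < μ → P.coeff (P.natDegree - j) = 0) (hk : 0 < k) (hm : 0 < m)
    (hroots : ∀ z, P.IsRoot z → ‖z‖ ≤ k) (hle : ∀ z ∈ sphere (0 : ℂ) k, m ≤ ‖P.eval z‖) :
    μ * ‖P.coeff (P.natDegree - μ)‖ ≤
      P.natDegree * (‖P.leadingCoeff‖ - m / k ^ P.natDegree) * k ^ μ := by
  set M := m / k ^ P.natDegree
  set a := ‖P.leadingCoeff‖
  have hM : 0 < M := by positivity
  have hMa : M ≤ a := div_pow_le_norm_leadingCoeff hk hm hroots hle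
  have ha : 0 < a := hM.trans_le hMa
  have hshrink : ∀ r ∈ Set.Ico 0 M,
      μ * ‖P.coeff (P.natDegree - μ)‖ ≤ P.natDegree * (a - r) * k ^ μ := by
    rintro r ⟨hr0, hrM⟩
    have hra : r / a ≤ 1 := div_le_one_of_le₀ (hrM.le.trans hMa) ha.le
    have hc : ‖-((r / a : ℝ) : ℂ) * P.leadingCoeff‖ = r := by
      rw [norm_mul, norm_neg, Complex.norm_real, Real.norm_of_nonneg (by positivity),
        div_mul_cancel₀ _ ha.ne']
    have hlc : ‖P.leadingCoeff + -((r / a : ℝ) : ℂ) * P.leadingCoeff‖ = a - r := by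
      calc ‖P.leadingCoeff + -((r / a : ℝ) : ℂ) * P.leadingCoeff‖
          = ‖((1 - r / a : ℝ) : ℂ) * P.leadingCoeff‖ := by push_cast; ring_nf
        _ = a - r := by
          rw [norm_mul, Complex.norm_real, Real.norm_of_nonneg (sub_nonneg.2 hra), sub_mul,
            one_mul, div_mul_cancel₀ _ ha.ne']
    have := natCast_mul_norm_coeff_sub_le_norm_leadingCoeff_add hμ hμn hgap hk hm hroots hle
      (hc.trans_lt hrM)
    rwa [hlc] at this
  have hclosed : IsClosed {r : ℝ | μ * ‖P.coeff (P.natDegree - μ)‖ ≤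
      P.natDegree * (a - r) * k ^ μ} := isClosed_le continuous_const (by fun_prop)
  refine hclosed.closure_subset_iff.2 hshrink ?_
  rw [closure_Ico hM.ne]
  exact ⟨hM.le, le_rfl⟩

theorem div_le_pow_of_le_mul_pow {S B k : ℝ} {μ : ℕ} (hμ : 0 < μ) (hk0 : 0 ≤ k) (hk1 : k ≤ 1)
    (hS : 0 ≤ S) (hB : 0 ≤ B) (hBS : B ≤ S * k ^ μ) :
    (S * k ^ (2 * μ) + B * k ^ (μ - 1)) / (S * k ^ (μ - 1) + B) ≤ k ^ μ := by
  set u := k ^ (μ - 1)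
  have hpow : k ^ μ = k * u := by rw [← pow_succ', Nat.sub_add_cancel hμ]
  have hpow2 : k ^ (2 * μ) = (k * u) ^ 2 := by rw [← hpow, pow_mul']
  rcases (by positivity : 0 ≤ S * u + B).eq_or_lt with hD | hD
  · rw [← hD, div_zero]
    positivity
  rw [div_le_iff₀ hD, hpow2, hpow]
  have key : 0 ≤ u * (1 - k) * (S * (k * u) - B) :=
    mul_nonneg (mul_nonneg (by positivity) (sub_nonneg.2 hk1)) (sub_nonneg.2 (hpow ▸ hBS))
  linear_combination key

/-- **Lemma 7.** If `P(z) = aₙzⁿ + Σ_{j=μ}^n a_{n-j} z^{n-j}`, `1 ≤ μ ≤ n`, has all its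
zeros in `|z| ≤ k ≤ 1`, and `m = min_{|z|=k} |P(z)|`, then `A_μ ≤ k^μ` where
`A_μ = (n(|aₙ| - m/kⁿ) k^{2μ} + μ|a_{n-μ}| k^{μ-1}) / (n(|aₙ| - m/kⁿ) k^{μ-1} + μ|a_{n-μ}|)`. -/
theorem A_mu_le_k_pow_mu
    (n μ : ℕ) (P : Polynomial ℂ) (k : ℝ)
    (hμ1 : 1 ≤ μ) (hμn : μ ≤ n)
    (hdeg : P.natDegree = n)
    (hcoeff : ∀ j, 1 ≤ j → j < μ → P.coeff (n - j) = 0)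
    (hk : k ≤ 1)
    (hzeros : ∀ z : ℂ, P.eval z = 0 → ‖z‖ ≤ k)
    (m A : ℝ)
    (hm : m = sInf ((fun z => ‖P.eval z‖) '' sphere (0 : ℂ) k))
    (hA : A = ((n : ℝ) * (‖P.coeff n‖ - m / k ^ n) * k ^ (2 * μ)
              + (μ : ℝ) * ‖P.coeff (n - μ)‖ * k ^ (μ - 1))
            / ((n : ℝ) * (‖P.coeff n‖ - m / k ^ n) * k ^ (μ - 1)
              + (μ : ℝ) * ‖P.coeff (n - μ)‖)) :
    A ≤ k ^ μ := by
  subst hdeg hA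
  obtain ⟨z₀, hz₀⟩ :=
    Complex.exists_root (natDegree_pos_iff_degree_pos.1 (by omega : 0 < P.natDegree))
  have hk0 : 0 ≤ k := (norm_nonneg z₀).trans (hzeros z₀ hz₀)
  have hbdd : BddBelow ((fun z => ‖P.eval z‖) '' sphere (0 : ℂ) k) :=
    ⟨0, by rintro _ ⟨z, -, rfl⟩; exact norm_nonneg _⟩
  have hle : ∀ z ∈ sphere (0 : ℂ) k, m ≤ ‖P.eval z‖ := fun z hz ↦
    hm ▸ csInf_le hbdd ⟨z, hz, rfl⟩
  have hm0 : 0 ≤ m := hm ▸ Real.sInf_nonneg (by rintro _ ⟨z, -, rfl⟩; exact norm_nonneg _)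
  obtain ⟨hMa, hkey⟩ : m / k ^ P.natDegree ≤ ‖P.leadingCoeff‖ ∧
      μ * ‖P.coeff (P.natDegree - μ)‖ ≤
        P.natDegree * (‖P.leadingCoeff‖ - m / k ^ P.natDegree) * k ^ μ := by
    rcases hm0.eq_or_lt with rfl | hm_pos
    · simpa using natCast_mul_norm_coeff_sub_le_of_norm_roots_le hμ1 hμn hcoeff hzeros
    have hk_pos : 0 < k := hk0.lt_of_ne <| by
      rintro rfl
      have hz₀0 : z₀ = 0 := norm_le_zero_iff.1 (hzeros z₀ hz₀)
      have := hle z₀ (by simp [hz₀0])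
      rw [hz₀.eq_zero, norm_zero] at this
      exact hm_pos.not_ge this
    exact ⟨div_pow_le_norm_leadingCoeff hk_pos hm_pos hzeros hle,
      natCast_mul_norm_coeff_sub_le_of_le_norm_eval_sphere hμ1 hμn hcoeff hk_pos hm_pos hzeros hle⟩
  exact div_le_pow_of_le_mul_pow hμ1 hk0 hk (mul_nonneg (Nat.cast_nonneg _) (sub_nonneg.2 hMa))
    (by positivity) hkey
end

section
/- Let P(z) = a_n z^n + Σ_{ν=μ}^{n} a_{n−ν} z^{n−ν}, 1 ≤ μ ≤ n, be a polynomial of degree n having all its zeros in |z| < k, where k ≤ 1, and set m = min_{|z|=k} |P(z)|. Then for every complex number α with |α| ≥ k^μ and every z with |z| = 1, |D_α P(z)| ≥ (|α| − k^μ)|P′(z)| + k^μ · mn/k^n. -/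
open Polynomial Metric

/-!
Under `w = 1/z` the quotient `(nQ - zQ')/(zQ')` becomes a quotient of polynomials on the disc
`|w| ≤ 1/k` whose numerator vanishes to order `μ` at `0` (this is where the gap in the
coefficients enters). It has modulus at most `1` there, since `Re (zQ'/Q) = Σ Re (z/(z - r)) ≥ n/2`
when every root `r` satisfies `|r| < |z|`; the maximum modulus principle then gives
`|nQ - zQ'| ≤ (k/|z|)^μ |zQ'|` for `|z| ≥ k`, as in Schwarz's lemma.

By the minimum modulus principle `|P(z)| ≥ m |z|ⁿ/kⁿ` for `|z| ≥ k`, so every `P + β zⁿ` with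
`|β| < m/kⁿ` still has all its zeros in `|z| < k`. Applying the bound to these polynomials, with
`β` chosen to push `P'(z)` towards `0`, yields `|nP - zP'| ≤ k^μ (|P'| - mn/kⁿ)` on `|z| = 1`,
and the triangle inequality for `D_α P = αP' + (nP - zP')` finishes the proof.
-/

namespace Complex

-- `Re (z/(z - r)) - 1/2 = (|z|² - |r|²) / (2 |z - r|²)`
theorem one_half_le_re_div_sub {z r : ℂ} (h : ‖r‖ < ‖z‖) : 1 / 2 ≤ (z / (z - r)).re := by
  have hzr : 0 < normSq (z - r) := normSq_pos.2 fun h0 => by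
    rw [sub_eq_zero.1 h0] at h; exact lt_irrefl _ h
  have h2 : normSq r < normSq z := by
    simpa [← Complex.sq_norm] using pow_lt_pow_left₀ h (norm_nonneg r) two_ne_zero
  rw [div_re, ← add_div, le_div_iff₀ hzr]
  simp only [normSq_apply, sub_re, sub_im] at *
  nlinarith

theorem norm_sub_le_norm_of_half_le_re {c : ℝ} {T : ℂ} (hc : 0 ≤ c) (h : c / 2 ≤ T.re) :
    ‖(c : ℂ) - T‖ ≤ ‖T‖ := by
  rw [← sq_le_sq₀ (norm_nonneg _) (norm_nonneg _), Complex.sq_norm, Complex.sq_norm,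
    normSq_apply, normSq_apply]
  simp only [sub_re, sub_im, ofReal_re, ofReal_im]
  nlinarith

theorem norm_le_mul_norm_of_forall_mem_frontier {E : Type*} [NormedAddCommGroup E]
    [NormedSpace ℂ E] [Nontrivial E] {f g : E → ℂ} {U : Set E} {c : ℝ} (hU : Bornology.IsBounded U)
    (hf : DiffContOnCl ℂ f U) (hg : DiffContOnCl ℂ g U) (hg0 : ∀ z ∈ closure U, g z ≠ 0)
    (h : ∀ z ∈ frontier U, ‖f z‖ ≤ c * ‖g z‖) {z : E} (hz : z ∈ closure U) :
    ‖f z‖ ≤ c * ‖g z‖ := by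
  have hfg : DiffContOnCl ℂ (fun z => f z / g z) U := by
    simp only [div_eq_mul_inv]
    exact ⟨hf.differentiableOn.mul (hg.inv hg0).differentiableOn,
      hf.continuousOn.mul (hg.inv hg0).continuousOn⟩
  have key := norm_le_of_forall_mem_frontier_norm_le hU hfg (C := c) (fun z hz => by
    rw [norm_div, div_le_iff₀ (norm_pos_iff.2 (hg0 z (frontier_subset_closure hz)))]
    exact h z hz) hz
  rwa [norm_div, div_le_iff₀ (norm_pos_iff.2 (hg0 z hz))] at key

end Complex

theorem le_max_norm_sub_of_forall_mem_ball {E : Type*} [NormedAddCommGroup E] [NormedSpace ℝ E]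
    {B : E} {r a : ℝ} (hr : 0 < r) (h : ∀ w ∈ ball B r, a ≤ ‖w‖) : a ≤ max (‖B‖ - r) 0 := by
  rcases lt_or_ge ‖B‖ r with hB | hB
  · exact (h 0 (by simpa using hB)).trans (by simp)
  refine le_max_of_le_left (le_of_forall_gt_imp_ge_of_dense fun x hx => ?_)
  rcases le_or_gt ‖B‖ x with hBx | hxB
  · exact (h B (mem_ball_self hr)).trans hBx
  have hB0 : 0 < ‖B‖ := hr.trans_le hB
  have hx0 : 0 < x := by linarith
  have hw : (x / ‖B‖) • B ∈ ball B r := by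
    rw [mem_ball, dist_eq_norm, show (x / ‖B‖) • B - B = (x / ‖B‖ - 1) • B by
      rw [sub_smul, one_smul], norm_smul, Real.norm_eq_abs,
      abs_of_neg (by rw [sub_neg, div_lt_one hB0]; exact hxB), neg_sub, sub_mul, one_mul,
      div_mul_cancel₀ _ hB0.ne']
    linarith
  simpa [norm_smul, abs_of_pos hx0, hB0.ne'] using h _ hw

theorem IsCompact.sInf_image_pos {X : Type*} [TopologicalSpace X] {s : Set X} (hs : IsCompact s)
    (hne : s.Nonempty) {f : X → ℝ} (hf : ContinuousOn f s) (hpos : ∀ x ∈ s, 0 < f x) :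
    0 < sInf (f '' s) := by
  obtain ⟨x, hx, hfx⟩ := (hs.image_of_continuousOn hf).sInf_mem (hne.image f)
  exact hfx ▸ hpos x hx

namespace Polynomial

theorem coeff_X_mul_derivative {R : Type*} [Semiring R] (p : R[X]) (i : ℕ) :
    (X * derivative p).coeff i = p.coeff i * i := by
  cases i <;> simp [coeff_X_mul, coeff_derivative]

theorem natDegree_X_mul_derivative_le {R : Type*} [Semiring R] (p : R[X]) :
    (X * derivative p).natDegree ≤ p.natDegree :=
  natDegree_le_iff_coeff_eq_zero.2 fun i hi => by
    rw [coeff_X_mul_derivative, coeff_eq_zero_of_natDegree_lt hi, zero_mul]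

theorem natDegree_add_C_mul_X_pow_natDegree {R : Type*} [Semiring R] {p : R[X]} {b : R}
    (h : p.leadingCoeff + b ≠ 0) : (p + C b * X ^ p.natDegree).natDegree = p.natDegree :=
  natDegree_eq_of_le_of_coeff_ne_zero (natDegree_add_le_of_degree_le le_rfl
    (natDegree_C_mul_X_pow_le _ _)) (by simpa [coeff_C_mul] using h)

theorem eval_reflect_of_ne_zero {K : Type*} [Field K] {f : K[X]} {N : ℕ} (hf : f.natDegree ≤ N)
    {w : K} (hw : w ≠ 0) : (reflect N f).eval w = w ^ N * f.eval w⁻¹ := by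
  let := invertibleOfNonzero (inv_ne_zero hw)
  have h := eval₂_reflect_mul_pow (RingHom.id K) w⁻¹ N f hf
  rw [invOf_eq_inv, inv_inv, inv_pow] at h
  simp only [eval]
  rw [← h]
  field_simp

theorem half_natDegree_le_re_mul_eval_derivative_div {Q : ℂ[X]} {z : ℂ}
    (hQ : ∀ r, Q.IsRoot r → ‖r‖ < ‖z‖) :
    (Q.natDegree : ℝ) / 2 ≤ (z * (derivative Q).eval z / Q.eval z).re := by
  have hsplits : Splits Q := IsAlgClosed.splits Q
  have hz : Q.eval z ≠ 0 := fun h => lt_irrefl _ (hQ z h)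
  have hQ0 : Q ≠ 0 := fun h => hz (by simp [h])
  have hre : ∀ s : Multiset ℂ, s.sum.re = (s.map Complex.re).sum :=
    map_multiset_sum Complex.reAddGroupHom
  rw [mul_div_assoc, hsplits.eval_derivative_div_eval_of_ne_zero hz,
    ← Multiset.sum_map_mul_left, hre, hsplits.natDegree_eq_card_roots,
    ← Multiset.card_map (Complex.re ∘ _), Multiset.map_map, div_eq_mul_one_div, ← nsmul_eq_mul]
  refine Multiset.card_nsmul_le_sum fun x hx => ?_
  obtain ⟨r, hr, rfl⟩ := Multiset.mem_map.1 hx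
  simpa [div_eq_mul_inv] using Complex.one_half_le_re_div_sub (hQ r ((mem_roots hQ0).1 hr))

theorem norm_natDegree_mul_eval_sub_le {Q : ℂ[X]} {z : ℂ} (hQ : ∀ r, Q.IsRoot r → ‖r‖ < ‖z‖) :
    ‖(Q.natDegree : ℂ) * Q.eval z - z * (derivative Q).eval z‖ ≤ ‖z * (derivative Q).eval z‖ := by
  have hz : Q.eval z ≠ 0 := fun h => lt_irrefl _ (hQ z h)
  set T := z * (derivative Q).eval z / Q.eval z
  have hT : z * (derivative Q).eval z = Q.eval z * T := (mul_div_cancel₀ _ hz).symm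
  rw [hT, show (Q.natDegree : ℂ) * Q.eval z - Q.eval z * T = Q.eval z * (Q.natDegree - T) by ring,
    norm_mul, norm_mul]
  gcongr
  exact Complex.norm_sub_le_norm_of_half_le_re (Nat.cast_nonneg _)
    (half_natDegree_le_re_mul_eval_derivative_div hQ)

theorem mul_eval_derivative_ne_zero {Q : ℂ[X]} {z : ℂ} (hn : 0 < Q.natDegree)
    (hQ : ∀ r, Q.IsRoot r → ‖r‖ < ‖z‖) : z * (derivative Q).eval z ≠ 0 := by
  intro h
  have := half_natDegree_le_re_mul_eval_derivative_div hQ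
  rw [h, zero_div, Complex.zero_re] at this
  have : (0 : ℝ) < Q.natDegree := by exact_mod_cast hn
  linarith

theorem eval_reflect_ne_zero {K : Type*} [NormedField K] {F : K[X]} {N : ℕ} {k : ℝ} (hk : 0 < k)
    (hF : F.natDegree ≤ N) (hN : F.coeff N ≠ 0) (hF0 : ∀ z, k ≤ ‖z‖ → F.eval z ≠ 0) {w : K}
    (hw : ‖w‖ ≤ k⁻¹) :
    (reflect N F).eval w ≠ 0 := by
  rcases eq_or_ne w 0 with rfl | hw0
  · rwa [← coeff_zero_eq_eval_zero, coeff_reflect, revAt_le (Nat.zero_le N), Nat.sub_zero]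
  · rw [eval_reflect_of_ne_zero hF hw0]
    refine mul_ne_zero (pow_ne_zero _ hw0) (hF0 _ ?_)
    rw [norm_inv]
    exact (le_inv_comm₀ (norm_pos_iff.2 hw0) hk).1 hw

theorem X_pow_dvd_reflect_natDegree_mul_sub_X_mul_derivative {R : Type*} [CommRing R] {Q : R[X]}
    {μ : ℕ} (hgap : ∀ j, 1 ≤ j → j < μ → Q.coeff (Q.natDegree - j) = 0) :
    X ^ μ ∣ reflect Q.natDegree (C (Q.natDegree : R) * Q - X * derivative Q) := by
  refine X_pow_dvd_iff.2 fun j hj => ?_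
  rw [coeff_reflect, coeff_sub, coeff_C_mul, coeff_X_mul_derivative]
  rcases le_or_gt j Q.natDegree with hjn | hjn
  · rw [revAt_le hjn, Nat.cast_sub hjn]
    rcases Nat.eq_zero_or_pos j with rfl | hj0
    · simp [mul_comm]
    · rw [hgap j hj0 hj]
      ring
  · rw [revAt_eq_self_of_lt hjn, coeff_eq_zero_of_natDegree_lt hjn]
    ring

theorem norm_eval_le_of_X_pow_dvd {A B : ℂ[X]} {μ : ℕ} {R : ℝ} (hR : 0 < R) (hA : X ^ μ ∣ A)
    (hB : ∀ w ∈ closedBall (0 : ℂ) R, B.eval w ≠ 0)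
    (hAB : ∀ w ∈ sphere (0 : ℂ) R, ‖A.eval w‖ ≤ ‖B.eval w‖) {w : ℂ} (hw : w ∈ closedBall 0 R) :
    ‖A.eval w‖ ≤ (‖w‖ / R) ^ μ * ‖B.eval w‖ := by
  obtain ⟨A₁, rfl⟩ := hA
  have hRμ : 0 < R ^ μ := pow_pos hR μ
  have key : ‖A₁.eval w‖ ≤ (R ^ μ)⁻¹ * ‖B.eval w‖ := by
    refine Complex.norm_le_mul_norm_of_forall_mem_frontier isBounded_ball
      A₁.differentiable.diffContOnCl B.differentiable.diffContOnCl
      (by rwa [closure_ball _ hR.ne']) (fun v hv => ?_) (by rwa [closure_ball _ hR.ne'])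
    rw [frontier_ball _ hR.ne'] at hv
    have h := hAB v hv
    rw [eval_mul, eval_pow, eval_X, norm_mul, norm_pow, mem_sphere_zero_iff_norm.1 hv] at h
    rwa [inv_mul_eq_div, le_div_iff₀ hRμ, mul_comm]
  rw [eval_mul, eval_pow, eval_X, norm_mul, norm_pow, div_pow, div_eq_mul_inv, mul_assoc]
  gcongr

theorem norm_natDegree_mul_eval_sub_le_of_coeff_eq_zero {Q : ℂ[X]} {μ : ℕ} {k : ℝ} (hk : 0 < k)
    (hn : 0 < Q.natDegree) (hgap : ∀ j, 1 ≤ j → j < μ → Q.coeff (Q.natDegree - j) = 0)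
    (hzeros : ∀ z, Q.IsRoot z → ‖z‖ < k) {z : ℂ} (hz : k ≤ ‖z‖) :
    ‖(Q.natDegree : ℂ) * Q.eval z - z * (derivative Q).eval z‖
      ≤ (k / ‖z‖) ^ μ * ‖z * (derivative Q).eval z‖ := by
  set n := Q.natDegree
  have hroots : ∀ z : ℂ, k ≤ ‖z‖ → ∀ r, Q.IsRoot r → ‖r‖ < ‖z‖ := fun z hz r hr =>
    (hzeros r hr).trans_le hz
  have hBdeg : (X * derivative Q).natDegree ≤ n := natDegree_X_mul_derivative_le Q
  have hAdeg : (C (n : ℂ) * Q - X * derivative Q).natDegree ≤ n :=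
    (natDegree_sub_le_iff_left hBdeg).2 (natDegree_C_mul_le _ _)
  set A := reflect n (C (n : ℂ) * Q - X * derivative Q)
  set B := reflect n (X * derivative Q)
  have hA : X ^ μ ∣ A := X_pow_dvd_reflect_natDegree_mul_sub_X_mul_derivative hgap
  have hBn : (X * derivative Q).coeff n ≠ 0 := by
    rw [coeff_X_mul_derivative]
    exact mul_ne_zero (leadingCoeff_ne_zero.2 (ne_zero_of_natDegree_gt hn))
      (Nat.cast_ne_zero.2 hn.ne')
  have hB : ∀ w ∈ closedBall (0 : ℂ) k⁻¹, B.eval w ≠ 0 := fun w hw =>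
    eval_reflect_ne_zero hk hBdeg hBn
      (fun z hz => by simpa using mul_eval_derivative_ne_zero hn (hroots z hz))
      (mem_closedBall_zero_iff.1 hw)
  have hAB : ∀ w : ℂ, w ≠ 0 → ‖w‖ ≤ k⁻¹ → ‖A.eval w‖ ≤ ‖B.eval w‖ := by
    intro w hw0 hw
    rw [eval_reflect_of_ne_zero hAdeg hw0, eval_reflect_of_ne_zero hBdeg hw0, norm_mul, norm_mul]
    gcongr
    simp only [eval_sub, eval_mul, eval_C, eval_X]
    refine norm_natDegree_mul_eval_sub_le (hroots _ ?_)
    rw [norm_inv]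
    exact (le_inv_comm₀ (norm_pos_iff.2 hw0) hk).1 hw
  have hz0 : z ≠ 0 := norm_pos_iff.1 (hk.trans_le hz)
  have hzk : ‖z⁻¹‖ ≤ k⁻¹ := by
    rw [norm_inv]
    exact inv_anti₀ hk hz
  have h := norm_eval_le_of_X_pow_dvd (inv_pos.2 hk) hA hB
    (fun w hw => hAB w (ne_of_mem_sphere hw (inv_pos.2 hk).ne') (mem_sphere_zero_iff_norm.1 hw).le)
    (mem_closedBall_zero_iff.2 hzk)
  rw [eval_reflect_of_ne_zero hAdeg (inv_ne_zero hz0),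
    eval_reflect_of_ne_zero hBdeg (inv_ne_zero hz0), inv_inv, norm_mul, norm_mul,
    mul_left_comm] at h
  simp only [eval_sub, eval_mul, eval_C, eval_X] at h
  have hpos : 0 < ‖z⁻¹ ^ n‖ := norm_pos_iff.2 (pow_ne_zero _ (inv_ne_zero hz0))
  rw [mul_le_mul_iff_right₀ hpos, norm_inv, div_inv_eq_mul, inv_mul_eq_div] at h
  exact h

-- The minimum modulus principle for `P` on `|z| ≥ k`, read through `w = 1/z`.
theorem div_pow_le_norm_eval_reflect {P : ℂ[X]} {k m : ℝ} (hk : 0 < k) (hm : 0 ≤ m)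
    (hzeros : ∀ z, P.IsRoot z → ‖z‖ < k) (hmin : ∀ z ∈ sphere (0 : ℂ) k, m ≤ ‖P.eval z‖) {w : ℂ}
    (hw : w ∈ closedBall (0 : ℂ) k⁻¹) : m / k ^ P.natDegree ≤ ‖(reflect P.natDegree P).eval w‖ := by
  have hk' : k⁻¹ ≠ 0 := (inv_pos.2 hk).ne'
  have hP : P ≠ 0 := fun h => by simpa [abs_of_pos hk] using hzeros k (by simp [h])
  have hmk : 0 ≤ m / k ^ P.natDegree := by positivity
  have key := Complex.norm_le_mul_norm_of_forall_mem_frontier (c := 1)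
    (f := fun _ => ((m / k ^ P.natDegree : ℝ) : ℂ)) isBounded_ball diffContOnCl_const
    (reflect P.natDegree P).differentiable.diffContOnCl (fun v hv => ?_) (fun v hv => ?_)
    (by rwa [closure_ball _ hk'] : w ∈ closure (ball (0 : ℂ) k⁻¹))
  · simpa [abs_of_nonneg hm, abs_of_pos hk] using key
  · rw [closure_ball _ hk'] at hv
    exact eval_reflect_ne_zero hk le_rfl (leadingCoeff_ne_zero.2 hP)
      (fun z hz hPz => (hzeros z hPz).not_ge hz) (mem_closedBall_zero_iff.1 hv)
  rw [frontier_ball _ hk', mem_sphere_zero_iff_norm] at hv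
  have hv0 : v ≠ 0 := norm_pos_iff.1 (hv ▸ inv_pos.2 hk)
  rw [eval_reflect_of_ne_zero le_rfl hv0, one_mul, norm_mul, norm_pow, hv, Complex.norm_real,
    Real.norm_of_nonneg hmk, inv_pow, ← div_eq_inv_mul]
  gcongr
  exact hmin _ (by rw [mem_sphere_zero_iff_norm, norm_inv, hv, inv_inv])

theorem div_pow_le_norm_leadingCoeff_s13 {P : ℂ[X]} {k m : ℝ} (hk : 0 < k) (hm : 0 ≤ m)
    (hzeros : ∀ z, P.IsRoot z → ‖z‖ < k) (hmin : ∀ z ∈ sphere (0 : ℂ) k, m ≤ ‖P.eval z‖) :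
    m / k ^ P.natDegree ≤ ‖P.leadingCoeff‖ := by
  simpa [← coeff_zero_eq_eval_zero, coeff_reflect] using
    div_pow_le_norm_eval_reflect hk hm hzeros hmin (mem_closedBall_self (inv_pos.2 hk).le)

theorem div_pow_mul_pow_le_norm_eval_s13 {P : ℂ[X]} {k m : ℝ} (hk : 0 < k) (hm : 0 ≤ m)
    (hzeros : ∀ z, P.IsRoot z → ‖z‖ < k) (hmin : ∀ z ∈ sphere (0 : ℂ) k, m ≤ ‖P.eval z‖) {z : ℂ}
    (hz : k ≤ ‖z‖) : m / k ^ P.natDegree * ‖z‖ ^ P.natDegree ≤ ‖P.eval z‖ := by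
  have hz0 : 0 < ‖z‖ := hk.trans_le hz
  have h := div_pow_le_norm_eval_reflect hk hm hzeros hmin (w := z⁻¹)
    (by rw [mem_closedBall_zero_iff, norm_inv]; exact inv_anti₀ hk hz)
  rw [eval_reflect_of_ne_zero le_rfl (inv_ne_zero (norm_pos_iff.1 hz0)), inv_inv, norm_mul,
    norm_pow, norm_inv, inv_pow, ← div_eq_inv_mul, le_div_iff₀ (by positivity)] at h
  exact h

theorem norm_lt_of_isRoot_add_C_mul_X_pow {P : ℂ[X]} {c k : ℝ} {β : ℂ} (hk : 0 < k)
    (hP : ∀ z, k ≤ ‖z‖ → c * ‖z‖ ^ P.natDegree ≤ ‖P.eval z‖) (hβ : ‖β‖ < c) {z : ℂ}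
    (hz : (P + C β * X ^ P.natDegree).IsRoot z) : ‖z‖ < k := by
  by_contra! hkz
  have hPz : P.eval z = -(β * z ^ P.natDegree) := by
    simpa [eq_neg_iff_add_eq_zero] using hz
  have h := hP z hkz
  rw [hPz, norm_neg, norm_mul, norm_pow] at h
  have : 0 < ‖z‖ ^ P.natDegree := pow_pos (hk.trans_le hkz) _
  nlinarith

theorem norm_natDegree_mul_eval_sub_le_of_add_C_mul_X_pow {P : ℂ[X]} {μ : ℕ} {c k : ℝ} {β : ℂ}
    (hk : 0 < k) (hn : 0 < P.natDegree) (hgap : ∀ j, 1 ≤ j → j < μ → P.coeff (P.natDegree - j) = 0)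
    (hP : ∀ z, k ≤ ‖z‖ → c * ‖z‖ ^ P.natDegree ≤ ‖P.eval z‖) (hlead : c ≤ ‖P.leadingCoeff‖)
    (hβ : ‖β‖ < c) {z : ℂ} (hz : k ≤ ‖z‖) :
    ‖(P.natDegree : ℂ) * P.eval z - z * (derivative P).eval z‖ ≤
      (k / ‖z‖) ^ μ * ‖z * ((derivative P).eval z + β * P.natDegree * z ^ (P.natDegree - 1))‖ := by
  have hdeg : (P + C β * X ^ P.natDegree).natDegree = P.natDegree := by
    refine natDegree_add_C_mul_X_pow_natDegree fun h => ?_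
    rw [← eq_neg_iff_add_eq_zero] at h
    rw [h, norm_neg] at hlead
    linarith
  have h := norm_natDegree_mul_eval_sub_le_of_coeff_eq_zero hk (by rwa [hdeg]) (μ := μ)
    (fun j hj hjμ => by
      rw [hdeg, coeff_add, coeff_C_mul_X_pow, if_neg (by omega), add_zero]
      exact hgap j hj hjμ)
    (fun z hz => norm_lt_of_isRoot_add_C_mul_X_pow hk hP hβ hz) hz
  have hpow : z * z ^ (P.natDegree - 1) = z ^ P.natDegree := by
    rw [← pow_succ', Nat.sub_add_cancel hn]
  simp only [hdeg, eval_add, eval_mul, eval_C, eval_pow, eval_X, derivative_add,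
    derivative_C_mul_X_pow] at h
  convert h using 2
  linear_combination (β * P.natDegree) * hpow

theorem norm_natDegree_mul_eval_sub_le_of_mem_ball {P : ℂ[X]} {μ : ℕ} {c k : ℝ} (hk : 0 < k)
    (hk1 : k ≤ 1) (hn : 0 < P.natDegree)
    (hgap : ∀ j, 1 ≤ j → j < μ → P.coeff (P.natDegree - j) = 0)
    (hP : ∀ z, k ≤ ‖z‖ → c * ‖z‖ ^ P.natDegree ≤ ‖P.eval z‖) (hlead : c ≤ ‖P.leadingCoeff‖)
    {z : ℂ} (hz : ‖z‖ = 1) {w : ℂ} (hw : w ∈ ball ((derivative P).eval z) (P.natDegree * c)) :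
    ‖(P.natDegree : ℂ) * P.eval z - z * (derivative P).eval z‖ ≤ k ^ μ * ‖w‖ := by
  have hnz : (P.natDegree : ℂ) * z ^ (P.natDegree - 1) ≠ 0 :=
    mul_ne_zero (Nat.cast_ne_zero.2 hn.ne') (pow_ne_zero _ (norm_ne_zero_iff.1 (by simp [hz])))
  set β := (w - (derivative P).eval z) / (P.natDegree * z ^ (P.natDegree - 1))
  have hβ : ‖β‖ < c := by
    rw [norm_div, norm_mul, norm_pow, hz, one_pow, mul_one, Complex.norm_natCast,
      div_lt_iff₀ (by exact_mod_cast hn), mul_comm, ← dist_eq_norm]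
    exact hw
  have hw' : (derivative P).eval z + β * P.natDegree * z ^ (P.natDegree - 1) = w := by
    rw [mul_assoc, div_mul_cancel₀ _ hnz, add_sub_cancel]
  have h := norm_natDegree_mul_eval_sub_le_of_add_C_mul_X_pow hk hn hgap hP hlead hβ (hz ▸ hk1)
  rwa [hw', norm_mul, hz, one_mul, div_one] at h

theorem norm_natDegree_mul_eval_sub_le_mul_sub {P : ℂ[X]} {μ : ℕ} {c k : ℝ} (hk : 0 < k)
    (hk1 : k ≤ 1) (hn : 0 < P.natDegree) (hc : 0 < c)
    (hgap : ∀ j, 1 ≤ j → j < μ → P.coeff (P.natDegree - j) = 0)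
    (hP : ∀ z, k ≤ ‖z‖ → c * ‖z‖ ^ P.natDegree ≤ ‖P.eval z‖) (hlead : c ≤ ‖P.leadingCoeff‖)
    {z : ℂ} (hz : ‖z‖ = 1) :
    ‖(P.natDegree : ℂ) * P.eval z - z * (derivative P).eval z‖
      ≤ k ^ μ * (‖(derivative P).eval z‖ - P.natDegree * c) := by
  have hkμ : 0 < k ^ μ := pow_pos hk μ
  have h := le_max_norm_sub_of_forall_mem_ball (B := (derivative P).eval z)
      (r := P.natDegree * c) (by positivity) fun w hw => by
    rw [div_le_iff₀' hkμ]
    exact norm_natDegree_mul_eval_sub_le_of_mem_ball hk hk1 hn hgap hP hlead hz hw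
  rw [div_le_iff₀' hkμ] at h
  have hPz : c ≤ ‖P.eval z‖ := by simpa [hz] using hP z (hz ▸ hk1)
  have htri := norm_add_le ((P.natDegree : ℂ) * P.eval z - z * (derivative P).eval z)
    (z * (derivative P).eval z)
  rw [sub_add_cancel, norm_mul, norm_mul, hz, one_mul, Complex.norm_natCast] at htri
  rcases lt_or_ge ‖(derivative P).eval z‖ (P.natDegree * c) with hlt | hge
  · rw [max_eq_right (by linarith), mul_zero] at h
    nlinarith [mul_le_mul_of_nonneg_left hPz (Nat.cast_nonneg P.natDegree)]
  · rwa [max_eq_left (by linarith)] at h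

end Polynomial

theorem polar_derivative_refined_pointwise_general
    (n μ : ℕ) (P : Polynomial ℂ) (k : ℝ) (α : ℂ)
    (hμ1 : 1 ≤ μ) (hμn : μ ≤ n)
    (hdeg : P.natDegree = n)
    (hcoeff : ∀ j, 1 ≤ j → j < μ → P.coeff (n - j) = 0)
    (hk : k ≤ 1)
    (hzeros : ∀ z : ℂ, P.eval z = 0 → ‖z‖ < k)
    (m : ℝ)
    (hm : m = sInf ((fun z => ‖P.eval z‖) '' sphere (0 : ℂ) k)) :
    ∀ z : ℂ, ‖z‖ = 1 →
      ‖(n : ℂ) * P.eval z + (α - z) * (Polynomial.derivative P).eval z‖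
        ≥ (‖α‖ - k ^ μ) * ‖(Polynomial.derivative P).eval z‖
          + k ^ μ * (m * (n : ℝ) / k ^ n) := by
  intro z hz
  have hn : 0 < n := hμ1.trans hμn
  subst hdeg
  have hk0 : 0 < k := by
    obtain ⟨r, hr⟩ := Complex.exists_root (natDegree_pos_iff_degree_pos.1 hn)
    exact (norm_nonneg r).trans_lt (hzeros r hr)
  have hmin : ∀ w ∈ sphere (0 : ℂ) k, m ≤ ‖P.eval w‖ := fun w hw =>
    hm ▸ csInf_le ⟨0, by rintro _ ⟨v, -, rfl⟩; positivity⟩ ⟨w, hw, rfl⟩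
  have hm0 : 0 < m := hm ▸ IsCompact.sInf_image_pos (isCompact_sphere 0 k)
    (NormedSpace.sphere_nonempty.2 hk0.le) P.continuous.norm.continuousOn
    fun w hw => norm_pos_iff.2 fun h => (hzeros w h).ne (mem_sphere_zero_iff_norm.1 hw)
  have hsharp := norm_natDegree_mul_eval_sub_le_mul_sub (μ := μ) hk0 hk hn (by positivity) hcoeff
    (fun w hw => div_pow_mul_pow_le_norm_eval_s13 hk0 hm0.le hzeros hmin hw)
    (div_pow_le_norm_leadingCoeff_s13 hk0 hm0.le hzeros hmin) hz
  set D := (derivative P).eval z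
  calc (‖α‖ - k ^ μ) * ‖D‖ + k ^ μ * (m * P.natDegree / k ^ P.natDegree)
      = ‖α * D‖ - k ^ μ * (‖D‖ - P.natDegree * (m / k ^ P.natDegree)) := by
        rw [norm_mul]; ring
    _ ≤ ‖α * D‖ - ‖(P.natDegree : ℂ) * P.eval z - z * D‖ := by gcongr
    _ ≤ ‖α * D + ((P.natDegree : ℂ) * P.eval z - z * D)‖ := norm_sub_le_norm_add _ _
    _ = ‖(P.natDegree : ℂ) * P.eval z + (α - z) * D‖ := by ring_nf

/-- If `P(z) = aₙzⁿ + Σ_{ν=μ}^n a_{n-ν} z^{n-ν}`, `1 ≤ μ ≤ n`, has all its zeros in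
`|z| < k ≤ 1` and `m = min_{|z|=k} |P(z)|`, then for every `α` with `|α| ≥ k^μ` and
every `z` with `|z| = 1`, `|D_α P(z)| ≥ (|α| - k^μ)|P'(z)| + k^μ mn/kⁿ`. -/
theorem polar_derivative_refined_pointwise
    (n μ : ℕ) (P : Polynomial ℂ) (k : ℝ) (α : ℂ)
    (hμ1 : 1 ≤ μ) (hμn : μ ≤ n)
    (hdeg : P.natDegree = n)
    (hcoeff : ∀ j, 1 ≤ j → j < μ → P.coeff (n - j) = 0)
    (hk : k ≤ 1)
    (hzeros : ∀ z : ℂ, P.eval z = 0 → ‖z‖ < k)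
    (hα : k ^ μ ≤ ‖α‖)
    (m : ℝ)
    (hm : m = sInf ((fun z => ‖P.eval z‖) '' sphere (0 : ℂ) k)) :
    ∀ z : ℂ, ‖z‖ = 1 →
      ‖(n : ℂ) * P.eval z + (α - z) * (Polynomial.derivative P).eval z‖
        ≥ (‖α‖ - k ^ μ) * ‖(Polynomial.derivative P).eval z‖
          + k ^ μ * (m * (n : ℝ) / k ^ n) :=
  polar_derivative_refined_pointwise_general n μ P k α hμ1 hμn hdeg hcoeff hk hzeros m hm
end
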